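/- arXiv:2111.07112 — 7 statements merged into one kernel-verified Lean document; each statement's English description precedes it below -/
import Mathlib

section
/- Let ε > 0 and let f_ε(r) = arctan(r/ε²) + (arctan ε)·r/ε for r ∈ [0, ε]. Then lim_{ε→0⁺} ∫_{r=0}^{ε} r·f_ε'(r)² dr = 1/2. -/
/-!
The integrand `r (a/(a² + r²) + c)²` has an elementary primitive, so for `ε > 0` the energy equals
`1/(2(1+ε²)) + arctan ε · (ε log(1+ε²) − 2 ε log ε) + (arctan ε)²/2`. Since `ε log ε → 0`, this
expression is continuous on all of `ℝ`, and its value at `ε = 0` is `1/2`.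
-/

open MeasureTheory Filter Topology Real

/-- The derivative of the zenith-angle function `f_ε(r) = arctan(r/ε²) + (arctan ε)·r/ε`,
namely `f_ε'(r) = ε²/(ε⁴ + r²) + (arctan ε)/ε`. -/
noncomputable def fder (ε r : ℝ) : ℝ := ε ^ 2 / (ε ^ 4 + r ^ 2) + Real.arctan ε / ε

theorem hasDerivAt_mul_sq_div_add {a : ℝ} (ha : a ≠ 0) (c r : ℝ) :
    HasDerivAt
      (fun r => -a ^ 2 / 2 * (a ^ 2 + r ^ 2)⁻¹ + c * a * log (a ^ 2 + r ^ 2) + c ^ 2 * r ^ 2 / 2)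
      (r * (a / (a ^ 2 + r ^ 2) + c) ^ 2) r := by
  have hpos : a ^ 2 + r ^ 2 ≠ 0 := by positivity
  have hq : HasDerivAt (fun r : ℝ => a ^ 2 + r ^ 2) (2 * r) r := by
    simpa using (hasDerivAt_pow 2 r).const_add (a ^ 2)
  refine ((((hq.inv hpos).const_mul (-a ^ 2 / 2)).add ((hq.log hpos).const_mul (c * a))).add
    (((hasDerivAt_pow 2 r).const_mul (c ^ 2)).div_const 2)).congr_deriv ?_
  field_simp
  ring

theorem integral_Ioo_mul_sq_div_add {a b : ℝ} (ha : a ≠ 0) (hb : 0 ≤ b) (c : ℝ) :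
    ∫ r in Set.Ioo 0 b, r * (a / (a ^ 2 + r ^ 2) + c) ^ 2 =
      b ^ 2 / (2 * (a ^ 2 + b ^ 2)) + c * a * (log (a ^ 2 + b ^ 2) - log (a ^ 2))
        + c ^ 2 * b ^ 2 / 2 := by
  have hcont : Continuous fun r => r * (a / (a ^ 2 + r ^ 2) + c) ^ 2 := by
    fun_prop (disch := intro r; positivity)
  rw [← integral_Ioc_eq_integral_Ioo, ← intervalIntegral.integral_of_le hb,
    intervalIntegral.integral_eq_sub_of_hasDerivAt (fun r _ => hasDerivAt_mul_sq_div_add ha c r)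
      (hcont.intervalIntegrable 0 b)]
  have : a ^ 2 + b ^ 2 ≠ 0 := by positivity
  simp only [zero_pow two_ne_zero, add_zero]
  field_simp
  ring

theorem integral_mul_fder_sq {ε : ℝ} (hε : 0 < ε) :
    ∫ r in Set.Ioo 0 ε, r * fder ε r ^ 2 =
      1 / (2 * (1 + ε ^ 2)) + arctan ε * (ε * log (1 + ε ^ 2) - 2 * (ε * log ε))
        + arctan ε ^ 2 / 2 := by
  have hfder (r : ℝ) : fder ε r = ε ^ 2 / ((ε ^ 2) ^ 2 + r ^ 2) + arctan ε / ε := by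
    rw [fder, ← pow_mul]
  simp only [hfder, integral_Ioo_mul_sq_div_add (pow_ne_zero 2 hε.ne') hε.le]
  rw [show (ε ^ 2) ^ 2 + ε ^ 2 = ε ^ 2 * (1 + ε ^ 2) by ring,
    log_mul (by positivity) (by positivity)]
  simp only [log_pow]
  field_simp
  push_cast
  ring

theorem continuous_energy_closed_form :
    Continuous fun ε => 1 / (2 * (1 + ε ^ 2)) + arctan ε * (ε * log (1 + ε ^ 2) - 2 * (ε * log ε))
      + arctan ε ^ 2 / 2 := by
  have := Real.continuous_mul_log
  fun_prop (disch := intro; positivity)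

/-- `lim_{ε→0⁺} ∫_{r=0}^{ε} r·f_ε'(r)² dr = 1/2`. -/
theorem conti_de_lellis_energy_stereo :
    Tendsto (fun ε : ℝ => ∫ r in Set.Ioo (0 : ℝ) ε, r * fder ε r ^ 2)
      (𝓝[>] 0) (𝓝 (1 / 2)) := by
  refine ((continuous_energy_closed_form.tendsto' 0 (1 / 2) (by simp)).mono_left
    nhdsWithin_le_nhds).congr' ?_
  filter_upwards [self_mem_nhdsWithin] with ε hε
  exact (integral_mul_fder_sq hε).symm
end

section
/- Let 0 < ε < min(1/e, √3/2) and let f_ε(r) = arctan(r/ε²) + (arctan ε)·r/ε for r ∈ [0, ε]. Then ∫_{r=0}^{ε} r·|d/dr(cos f_ε(r))| dr ≤ 12·ε²·|ln ε|. -/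
open MeasureTheory Filter Topology Real

/-- The zenith-angle function `f_ε(r) = arctan(r/ε²) + (arctan ε)·r/ε`. -/
noncomputable def fe (ε r : ℝ) : ℝ := Real.arctan (r / ε ^ 2) + Real.arctan ε * r / ε

/-! Since `f_ε' > 0` and `|sin| ≤ 1`, the integrand is at most `r f_ε'(r)`, whose integral is
elementary: `r f_ε'(r)` has the primitive `(ε²/2) log(ε⁴ + r²) + (arctan ε / ε) r²/2`, so
`∫₀^ε r f_ε' = (ε²/2) log(1 + 1/ε²) + ε arctan ε / 2 ≤ ε² (1 - log ε)`.
For `ε < 1/e` we have `1 < |log ε|`, and the bound follows. -/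

open Set intervalIntegral

lemma Real.arctan_le_self {x : ℝ} (hx : 0 ≤ x) : arctan x ≤ x := by
  simpa using le_tan (arctan_nonneg.2 hx) (arctan_lt_pi_div_two x)

lemma setIntegral_Ioo_mul_abs_sin_mul_le {f g : ℝ → ℝ} (hf : Continuous f) (hg : Continuous g)
    (hg0 : ∀ r, 0 ≤ g r) {a b : ℝ} (ha : 0 ≤ a) (hab : a ≤ b) :
    ∫ r in Ioo a b, r * |sin (f r) * g r| ≤ ∫ r in a..b, r * g r := by
  rw [integral_of_le hab, integral_Ioc_eq_integral_Ioo]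
  refine setIntegral_mono_on ?_ ?_ measurableSet_Ioo fun r hr => ?_
  · exact (Continuous.integrableOn_Icc (by fun_prop)).mono_set Ioo_subset_Icc_self
  · exact (Continuous.integrableOn_Icc (by fun_prop)).mono_set Ioo_subset_Icc_self
  · rw [abs_mul, abs_of_nonneg (hg0 r)]
    have hsin : |sin (f r)| * g r ≤ g r := mul_le_of_le_one_left (hg0 r) (abs_sin_le_one _)
    exact mul_le_mul_of_nonneg_left hsin (ha.trans hr.1.le)

lemma continuous_fe (ε : ℝ) : Continuous (fe ε) := by
  unfold fe
  fun_prop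

lemma continuous_fder {ε : ℝ} (hε : ε ≠ 0) : Continuous (fder ε) := by
  unfold fder
  fun_prop (disch := intro; positivity)

lemma fder_pos {ε : ℝ} (hε : 0 < ε) (r : ℝ) : 0 < fder ε r := by
  unfold fder
  positivity

lemma hasDerivAt_mul_fder {ε : ℝ} (hε : ε ≠ 0) (r : ℝ) :
    HasDerivAt (fun r => ε ^ 2 / 2 * log (ε ^ 4 + r ^ 2) + arctan ε / ε * (r ^ 2 / 2))
      (r * fder ε r) r := by
  have hden : ε ^ 4 + r ^ 2 ≠ 0 := by positivity
  have hlog : HasDerivAt (fun r => log (ε ^ 4 + r ^ 2)) (2 * r / (ε ^ 4 + r ^ 2)) r := by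
    simpa using ((hasDerivAt_pow 2 r).const_add (ε ^ 4)).log hden
  have hsq : HasDerivAt (fun r : ℝ => r ^ 2 / 2) r r := by
    simpa using (hasDerivAt_pow 2 r).div_const 2
  refine ((hlog.const_mul (ε ^ 2 / 2)).add (hsq.const_mul (arctan ε / ε))).congr_deriv ?_
  unfold fder
  field_simp

lemma integral_mul_fder {ε : ℝ} (hε : 0 < ε) :
    ∫ r in (0)..ε, r * fder ε r =
      ε ^ 2 / 2 * (log (1 + ε ^ 2) - 2 * log ε) + ε * arctan ε / 2 := by
  rw [integral_eq_sub_of_hasDerivAt (fun r _ => hasDerivAt_mul_fder hε.ne' r)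
    ((continuous_id.mul (continuous_fder hε.ne')).intervalIntegrable 0 ε)]
  have hsplit : ε ^ 4 + ε ^ 2 = ε ^ 2 * (1 + ε ^ 2) := by ring
  rw [hsplit, log_mul (by positivity) (by positivity), zero_pow two_ne_zero, add_zero, log_pow,
    log_pow]
  field_simp
  ring

lemma integral_mul_fder_le {ε : ℝ} (hε0 : 0 < ε) (hε1 : ε ≤ 1) :
    ∫ r in (0)..ε, r * fder ε r ≤ ε ^ 2 * (1 - log ε) := by
  rw [integral_mul_fder hε0]
  have hlog : log (1 + ε ^ 2) ≤ ε ^ 2 := by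
    linarith [log_le_sub_one_of_pos (x := 1 + ε ^ 2) (by positivity)]
  have harctan : ε * arctan ε ≤ ε ^ 2 := by
    rw [sq]
    exact mul_le_mul_of_nonneg_left (arctan_le_self hε0.le) hε0.le
  have hε2 : ε ^ 2 ≤ 1 := pow_le_one₀ hε0.le hε1
  nlinarith [mul_le_mul_of_nonneg_left hlog (sq_nonneg ε),
    mul_le_mul_of_nonneg_left hε2 (sq_nonneg ε)]

/-- for `0 < ε < min(1/e, √3/2)`,
`∫_{r=0}^{ε} r·|d/dr(cos f_ε(r))| dr ≤ 12·ε²·|ln ε|`,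
where `d/dr(cos f_ε(r)) = −sin(f_ε(r))·f_ε'(r)`. -/
theorem integral_deriv_cos_fe_bound (ε : ℝ) (hε0 : 0 < ε)
    (hε : ε < min (1 / Real.exp 1) (Real.sqrt 3 / 2)) :
    ∫ r in Set.Ioo (0 : ℝ) ε, r * |(-(Real.sin (fe ε r) * fder ε r))|
      ≤ 12 * ε ^ 2 * |Real.log ε| := by
  have hε_exp : ε < exp (-1) := by
    simpa [exp_neg] using hε.trans_le (min_le_left _ _)
  have hlog : log ε < -1 := (log_lt_iff_lt_exp hε0).2 hε_exp
  have hε1 : ε ≤ 1 := ((log_neg_iff hε0).1 (by linarith)).le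
  simp only [abs_neg]
  calc ∫ r in Ioo 0 ε, r * |sin (fe ε r) * fder ε r|
      ≤ ∫ r in (0)..ε, r * fder ε r :=
        setIntegral_Ioo_mul_abs_sin_mul_le (continuous_fe ε) (continuous_fder hε0.ne')
          (fun r => (fder_pos hε0 r).le) le_rfl hε0.le
    _ ≤ ε ^ 2 * (1 - log ε) := integral_mul_fder_le hε0 hε1
    _ ≤ 12 * ε ^ 2 * |log ε| := by
        rw [abs_of_neg (by linarith)]
        have h : 1 + 11 * log ε ≤ 0 := by linarith
        nlinarith [mul_le_mul_of_nonneg_left h (sq_nonneg ε)]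
end

section
/- Let ε > 0 and let f_ε(r) = arctan(r/ε²) + (arctan ε)·r/ε for r ∈ [0, ε]. Then for every r ∈ [0, ε): f_ε(r) < π/2 and ε − r·sin(f_ε(r)) > 0; moreover, for every r ∈ (0, ε) and every s ∈ [0, 1], h̃_ε(s, r) > 0. -/
open MeasureTheory Filter Topology Real

/-- The function `h_ε(s, φ)` of the paper, expressed through the substitution `r = g_ε(φ)`
(`g_ε` being the inverse of `f_ε`):
`h̃_ε(s, r) = ε·((1−s)·r/sin(f_ε(r)) + s·ε)·((1−s)·cos(f_ε(r))/f_ε'(r) + s·(ε − r·sin f_ε(r)))`. -/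
noncomputable def htilde (ε s r : ℝ) : ℝ :=
  ε * ((1 - s) * r / Real.sin (fe ε r) + s * ε) *
    ((1 - s) * Real.cos (fe ε r) / fder ε r + s * (ε - r * Real.sin (fe ε r)))

lemma arctan_pos (x : ℝ) (hx : 0 < x) : 0 < Real.arctan x := by
  rw [← Real.arctan_zero]; exact Real.arctan_strictMono hx

lemma fe_lt_pi_div_two (ε : ℝ) (hε : 0 < ε) (r : ℝ) (hr0 : 0 ≤ r) (hrε : r < ε) :
    fe ε r < π / 2 := by
  have h1 : Real.arctan (r / ε ^ 2) < Real.arctan ε⁻¹ := by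
    apply Real.arctan_strictMono
    rw [div_lt_iff₀ (by positivity)]
    have h : ε⁻¹ * ε ^ 2 = ε := by field_simp
    rw [h]; exact hrε
  have h2 : Real.arctan ε * r / ε < Real.arctan ε := by
    rw [div_lt_iff₀ hε]
    have := arctan_pos ε hε
    nlinarith
  have h3 : Real.arctan ε⁻¹ = π / 2 - Real.arctan ε := Real.arctan_inv_of_pos hε
  unfold fe
  linarith

lemma fe_pos (ε : ℝ) (hε : 0 < ε) (r : ℝ) (hr0 : 0 < r) : 0 < fe ε r := by
  have h1 : 0 < Real.arctan (r / ε ^ 2) := arctan_pos _ (by positivity)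
  have h2 : 0 < Real.arctan ε * r / ε := by
    have := arctan_pos ε hε; positivity
  unfold fe; linarith

lemma eps_sub_pos (ε : ℝ) (hε : 0 < ε) (r : ℝ) (hr0 : 0 ≤ r) (hrε : r < ε) :
    0 < ε - r * Real.sin (fe ε r) := by
  have : r * Real.sin (fe ε r) ≤ r * 1 :=
    mul_le_mul_of_nonneg_left (Real.sin_le_one _) hr0
  linarith

/-- for `ε > 0`: for every `r ∈ [0, ε)`, `f_ε(r) < π/2` and
`ε − r·sin(f_ε(r)) > 0`; moreover, for every `r ∈ (0, ε)` and every `s ∈ [0, 1]`,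
`h̃_ε(s, r) > 0`. -/
theorem htilde_positive (ε : ℝ) (hε : 0 < ε) :
    (∀ r ∈ Set.Ico (0 : ℝ) ε,
        fe ε r < π / 2 ∧ 0 < ε - r * Real.sin (fe ε r)) ∧
      ∀ r ∈ Set.Ioo (0 : ℝ) ε, ∀ s ∈ Set.Icc (0 : ℝ) 1, 0 < htilde ε s r := by
  constructor
  · intro r hr
    exact ⟨fe_lt_pi_div_two ε hε r hr.1 hr.2, eps_sub_pos ε hε r hr.1 hr.2⟩
  · rintro r ⟨hr0, hrε⟩ s ⟨hs0, hs1⟩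
    have hlt := fe_lt_pi_div_two ε hε r hr0.le hrε
    have hpos := fe_pos ε hε r hr0
    have hsin : 0 < Real.sin (fe ε r) :=
      Real.sin_pos_of_pos_of_lt_pi hpos (by linarith [Real.pi_pos])
    have hcos : 0 < Real.cos (fe ε r) :=
      Real.cos_pos_of_mem_Ioo ⟨by linarith, hlt⟩
    have hder : 0 < fder ε r := by
      have h1 : 0 < ε ^ 2 / (ε ^ 4 + r ^ 2) := by positivity
      have h2 : 0 < Real.arctan ε / ε := div_pos (arctan_pos ε hε) hε
      unfold fder; linarith
    have hsub := eps_sub_pos ε hε r hr0.le hrε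
    have hA : 0 < (1 - s) * r / Real.sin (fe ε r) + s * ε := by
      rcases eq_or_lt_of_le hs0 with h | h
      · rw [← h]; simp; positivity
      · have h1 : 0 ≤ (1 - s) * r / Real.sin (fe ε r) := by
          have : 0 ≤ 1 - s := by linarith
          positivity
        nlinarith
    have hB : 0 < (1 - s) * Real.cos (fe ε r) / fder ε r + s * (ε - r * Real.sin (fe ε r)) := by
      rcases eq_or_lt_of_le hs0 with h | h
      · rw [← h]; simp; positivity
      · have h1 : 0 ≤ (1 - s) * Real.cos (fe ε r) / fder ε r := by
          have : 0 ≤ 1 - s := by linarith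
          positivity
        nlinarith
    unfold htilde
    positivity
end

section
/- Let 0 < ε ≤ 1/π and let f_ε(r) = arctan(r/ε²) + (arctan ε)·r/ε for r ∈ [0, ε]. Then for every r ∈ (0, ε) and every s ∈ [0, 1]: (i) (1−s)·r/sin(f_ε(r)) + s·ε ≤ √2·ε; (ii) 0 < (1−s)·cos(f_ε(r))/f_ε'(r) + s·(ε − r·sin f_ε(r)) ≤ (3π/2)·cos(f_ε(r)); and (iii) |h̃_ε(s, r)| ≤ (3π·√2/2)·ε²·cos(f_ε(r)). -/
open MeasureTheory Filter Topology Real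

private lemma le_of_sq_le_sq' {a b : ℝ} (_ha : 0 ≤ a) (hb : 0 ≤ b) (h : a ^ 2 ≤ b ^ 2) :
    a ≤ b := by nlinarith

set_option maxHeartbeats 1600000 in
/-- for `0 < ε ≤ 1/π`, every `r ∈ (0, ε)` and every `s ∈ [0, 1]`:
(i) `(1−s)·r/sin(f_ε(r)) + s·ε ≤ √2·ε`;
(ii) `0 < (1−s)·cos(f_ε(r))/f_ε'(r) + s·(ε − r·sin f_ε(r)) ≤ (3π/2)·cos(f_ε(r))`;
(iii) `|h̃_ε(s, r)| ≤ (3π√2/2)·ε²·cos(f_ε(r))`. -/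
theorem htilde_bounds (ε : ℝ) (hε0 : 0 < ε) (hε : ε ≤ 1 / π) :
    ∀ r ∈ Set.Ioo (0 : ℝ) ε, ∀ s ∈ Set.Icc (0 : ℝ) 1,
      ((1 - s) * r / Real.sin (fe ε r) + s * ε ≤ Real.sqrt 2 * ε) ∧
        (0 < (1 - s) * Real.cos (fe ε r) / fder ε r + s * (ε - r * Real.sin (fe ε r)) ∧
          (1 - s) * Real.cos (fe ε r) / fder ε r + s * (ε - r * Real.sin (fe ε r))
            ≤ 3 * π / 2 * Real.cos (fe ε r)) ∧
        |htilde ε s r| ≤ 3 * π * Real.sqrt 2 / 2 * ε ^ 2 * Real.cos (fe ε r) := by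
  have hπ : (0 : ℝ) < π := Real.pi_pos
  have hπ3 : (3 : ℝ) < π := Real.pi_gt_three
  have hε1 : ε ≤ 1 := by
    have h1 : 1 / π ≤ 1 := by rw [div_le_one hπ]; linarith
    linarith
  rintro r ⟨hr0, hrε⟩ s ⟨hs0, hsle⟩
  have hε2 : (0 : ℝ) < ε ^ 2 := by positivity
  set x := r / ε ^ 2 with hxdef
  have hx0 : 0 < x := by positivity
  have hxε : x * ε = r / ε := by rw [hxdef]; field_simp
  have hxε1 : x * ε < 1 := by rw [hxε, div_lt_one hε0]; exact hrε
  have hat0 : 0 < Real.arctan ε := by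
    rw [← Real.arctan_zero]; exact Real.arctan_strictMono hε0
  have hfe_eq : fe ε r = Real.arctan x + Real.arctan ε * r / ε := rfl
  clear_value x
  -- bounds on fe
  have hb_nonneg : 0 ≤ Real.arctan ε * r / ε := by positivity
  have hb_le : Real.arctan ε * r / ε ≤ Real.arctan ε := by
    rw [div_le_iff₀ hε0]; exact mul_le_mul_of_nonneg_left hrε.le hat0.le
  have hf_lo : Real.arctan x ≤ fe ε r := by rw [hfe_eq]; linarith
  have hf0 : 0 < fe ε r := by
    have h1 : 0 < Real.arctan x := by
      rw [← Real.arctan_zero]; exact Real.arctan_strictMono hx0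
    linarith
  have hf_hi : fe ε r ≤ Real.arctan x + Real.arctan ε := by rw [hfe_eq]; linarith
  have hsum_lt : Real.arctan x + Real.arctan ε < π / 2 := by
    have hxlt : x < ε⁻¹ := by
      rw [← one_div, lt_div_iff₀ hε0]; exact hxε1
    have h1 := Real.arctan_strictMono hxlt
    rw [Real.arctan_inv_of_pos hε0] at h1
    linarith
  have hfπ2 : fe ε r < π / 2 := lt_of_le_of_lt hf_hi hsum_lt
  have hsinf : 0 < Real.sin (fe ε r) :=
    Real.sin_pos_of_pos_of_lt_pi hf0 (by linarith)
  have hcosf : 0 < Real.cos (fe ε r) :=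
    Real.cos_pos_of_mem_Ioo ⟨by linarith, hfπ2⟩
  have hsinf1 : Real.sin (fe ε r) ≤ 1 := Real.sin_le_one _
  have hcosf1 : Real.cos (fe ε r) ≤ 1 := Real.cos_le_one _
  -- sqrt facts
  have hs1 : Real.sqrt (1 + x ^ 2) ^ 2 = 1 + x ^ 2 := Real.sq_sqrt (by positivity)
  have hs1pos : 0 < Real.sqrt (1 + x ^ 2) := Real.sqrt_pos.2 (by positivity)
  have hs2 : Real.sqrt (1 + ε ^ 2) ^ 2 = 1 + ε ^ 2 := Real.sq_sqrt (by positivity)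
  have hs2pos : 0 < Real.sqrt (1 + ε ^ 2) := Real.sqrt_pos.2 (by positivity)
  have hq2 : Real.sqrt 2 ^ 2 = 2 := Real.sq_sqrt (by norm_num)
  have hq2pos : 0 < Real.sqrt 2 := Real.sqrt_pos.2 (by norm_num)
  have hq2ge1 : (1 : ℝ) ≤ Real.sqrt 2 :=
    le_of_sq_le_sq' (by norm_num) hq2pos.le (by rw [hq2]; norm_num)
  have h2e : ε ^ 4 + r ^ 2 ≤ 2 * ε ^ 2 := by
    have ha : r ^ 2 ≤ ε ^ 2 := pow_le_pow_left₀ hr0.le hrε.le 2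
    have hb : ε ^ 4 ≤ ε ^ 2 := pow_le_pow_of_le_one hε0.le hε1 (by norm_num)
    linarith
  have hr2 : r ^ 2 = ε ^ 4 * x ^ 2 := by rw [hxdef]; field_simp
  -- sin f ≥ sin (arctan x)
  have hsin_mono : Real.sin (Real.arctan x) ≤ Real.sin (fe ε r) :=
    Real.sin_le_sin_of_le_of_le_pi_div_two
      (by linarith [Real.neg_pi_div_two_lt_arctan x]) (le_of_lt hfπ2) hf_lo
  have hsin_lb : x / Real.sqrt (1 + x ^ 2) ≤ Real.sin (fe ε r) := by
    rw [← Real.sin_arctan x]; exact hsin_mono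
  -- key (i) bound : r ≤ √2 * ε * sin f
  have hr_le : r ≤ Real.sqrt 2 * ε * Real.sin (fe ε r) := by
    have hsq : (r * Real.sqrt (1 + x ^ 2)) ^ 2 ≤ (Real.sqrt 2 * ε * x) ^ 2 := by
      rw [mul_pow, mul_pow, mul_pow, hs1, hq2]
      linarith [mul_le_mul_of_nonneg_right h2e (sq_nonneg x), hr2]
    have hA : r * Real.sqrt (1 + x ^ 2) ≤ Real.sqrt 2 * ε * x :=
      le_of_sq_le_sq' (mul_nonneg hr0.le hs1pos.le)
        (by positivity) hsq
    have h4 : r ≤ Real.sqrt 2 * ε * x / Real.sqrt (1 + x ^ 2) :=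
      (le_div_iff₀ hs1pos).2 hA
    have h2' : x ≤ Real.sin (fe ε r) * Real.sqrt (1 + x ^ 2) :=
      (div_le_iff₀ hs1pos).1 hsin_lb
    have h5 : Real.sqrt 2 * ε * x / Real.sqrt (1 + x ^ 2)
        ≤ Real.sqrt 2 * ε * Real.sin (fe ε r) := by
      rw [div_le_iff₀ hs1pos]
      linarith [mul_le_mul_of_nonneg_left h2' (mul_nonneg hq2pos.le hε0.le)]
    linarith
  -- part (i)
  have hdiv : r / Real.sin (fe ε r) ≤ Real.sqrt 2 * ε := by
    rw [div_le_iff₀ hsinf]; linarith [hr_le]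
  have part1 : (1 - s) * r / Real.sin (fe ε r) + s * ε ≤ Real.sqrt 2 * ε := by
    rw [mul_div_assoc]
    have h1 : (1 - s) * (r / Real.sin (fe ε r)) ≤ (1 - s) * (Real.sqrt 2 * ε) :=
      mul_le_mul_of_nonneg_left hdiv (by linarith)
    have h2 : s * ε ≤ s * (Real.sqrt 2 * ε) :=
      mul_le_mul_of_nonneg_left
        (by linarith [mul_le_mul_of_nonneg_right hq2ge1 hε0.le]) hs0
    linarith
  -- cos lower bound : ε − r ≤ 2 cos f
  have hεs12 : ε * (Real.sqrt (1 + x ^ 2) * Real.sqrt (1 + ε ^ 2)) ≤ 2 := by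
    have hx2e : x ^ 2 * ε ^ 2 ≤ 1 := by
      have h := mul_le_mul hxε1.le hxε1.le (mul_pos hx0 hε0).le (by linarith)
      linarith [h]
    have hsq4 : (ε * (Real.sqrt (1 + x ^ 2) * Real.sqrt (1 + ε ^ 2))) ^ 2 ≤ 4 := by
      have he : (ε * (Real.sqrt (1 + x ^ 2) * Real.sqrt (1 + ε ^ 2))) ^ 2
          = ε ^ 2 * ((1 + x ^ 2) * (1 + ε ^ 2)) := by
        rw [mul_pow, mul_pow, hs1, hs2]
      rw [he, show ε ^ 2 * ((1 + x ^ 2) * (1 + ε ^ 2))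
          = (ε ^ 2 * (1 + x ^ 2)) * (1 + ε ^ 2) by ring]
      have hee : ε ^ 2 ≤ 1 := by
        have := mul_le_mul hε1 hε1 hε0.le (by norm_num)
        linarith [this]
      have ha : ε ^ 2 * (1 + x ^ 2) ≤ 2 := by linarith [hx2e, hee]
      have hb : 1 + ε ^ 2 ≤ 2 := by linarith
      have hc := mul_le_mul ha hb (by positivity) (by norm_num)
      linarith
    exact le_of_sq_le_sq' (mul_nonneg hε0.le (mul_nonneg hs1pos.le hs2pos.le))
      (by norm_num) (by rw [show ((2:ℝ)) ^ 2 = 4 by norm_num]; exact hsq4)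
  have hcos_sum : Real.cos (Real.arctan x + Real.arctan ε)
      = (1 - x * ε) / (Real.sqrt (1 + x ^ 2) * Real.sqrt (1 + ε ^ 2)) := by
    rw [Real.cos_add, Real.cos_arctan, Real.sin_arctan, Real.cos_arctan, Real.sin_arctan]
    field_simp
  have hεr_cos : ε - r ≤ 2 * Real.cos (fe ε r) := by
    have hmono := Real.cos_le_cos_of_nonneg_of_le_pi hf0.le
      (by linarith : Real.arctan x + Real.arctan ε ≤ π) hf_hi
    rw [hcos_sum] at hmono
    have h1mx : 0 < 1 - x * ε := by linarith
    have key : (ε - r) / 2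
        ≤ (1 - x * ε) / (Real.sqrt (1 + x ^ 2) * Real.sqrt (1 + ε ^ 2)) := by
      rw [div_le_div_iff₀ (by norm_num) (mul_pos hs1pos hs2pos)]
      have h1b : (ε - r) * (Real.sqrt (1 + x ^ 2) * Real.sqrt (1 + ε ^ 2))
          = ε * (1 - x * ε) * (Real.sqrt (1 + x ^ 2) * Real.sqrt (1 + ε ^ 2)) := by
        have : ε * (1 - x * ε) = ε - r := by
          rw [hxε]; field_simp
        rw [this]
      rw [h1b]
      linarith [mul_le_mul_of_nonneg_left hεs12 h1mx.le]
    linarith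
  -- fder bounds
  have hden : 0 < ε ^ 4 + r ^ 2 := by nlinarith
  have hfder_pos : 0 < fder ε r :=
    add_pos (div_pos hε2 hden) (div_pos hat0 hε0)
  have hfder_half : 1 / 2 ≤ fder ε r := by
    have h1 : (1 : ℝ) / 2 ≤ ε ^ 2 / (ε ^ 4 + r ^ 2) := by
      rw [div_le_div_iff₀ (by norm_num) hden]; linarith
    have h2 : 0 ≤ Real.arctan ε / ε := (div_pos hat0 hε0).le
    unfold fder; linarith
  have hc_le : Real.cos (fe ε r) / fder ε r ≤ 2 * Real.cos (fe ε r) := by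
    rw [div_le_iff₀ hfder_pos]
    linarith [mul_le_mul_of_nonneg_left hfder_half hcosf.le]
  -- 1 − sin f ≤ cos f
  have h1ms : 1 - Real.sin (fe ε r) ≤ Real.cos (fe ε r) := by
    linarith [Real.sin_sq_add_cos_sq (fe ε r),
      mul_nonneg hsinf.le (by linarith : (0:ℝ) ≤ 1 - Real.sin (fe ε r)),
      mul_nonneg hcosf.le (by linarith : (0:ℝ) ≤ 1 - Real.cos (fe ε r))]
  -- ε − r sin f ≤ 3 cos f
  have hεd : ε - r * Real.sin (fe ε r) ≤ 3 * Real.cos (fe ε r) := by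
    have hA : ε * (1 - Real.sin (fe ε r)) ≤ ε * Real.cos (fe ε r) :=
      mul_le_mul_of_nonneg_left h1ms hε0.le
    have hB : ε * Real.cos (fe ε r) ≤ Real.cos (fe ε r) := by
      linarith [mul_le_mul_of_nonneg_right hε1 hcosf.le]
    have hC : (ε - r) * Real.sin (fe ε r) ≤ ε - r := by
      linarith [mul_le_mul_of_nonneg_left hsinf1 (by linarith : (0:ℝ) ≤ ε - r)]
    linarith [hεr_cos, hA, hB, hC]
  -- part (ii)
  have hd_pos : 0 < ε - r * Real.sin (fe ε r) := by
    linarith [mul_le_mul_of_nonneg_left hsinf1 hr0.le]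
  have hc_pos : 0 < Real.cos (fe ε r) / fder ε r := div_pos hcosf hfder_pos
  have part2a : 0 < (1 - s) * Real.cos (fe ε r) / fder ε r
      + s * (ε - r * Real.sin (fe ε r)) := by
    rw [mul_div_assoc]
    rcases le_total (Real.cos (fe ε r) / fder ε r) (ε - r * Real.sin (fe ε r)) with h | h
    · linarith [mul_le_mul_of_nonneg_left h hs0, hc_pos]
    · linarith [mul_le_mul_of_nonneg_left h (by linarith : (0:ℝ) ≤ 1 - s), hd_pos]
  have part2b : (1 - s) * Real.cos (fe ε r) / fder ε r
      + s * (ε - r * Real.sin (fe ε r)) ≤ 3 * π / 2 * Real.cos (fe ε r) := by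
    rw [mul_div_assoc]
    have h1 : (1 - s) * (Real.cos (fe ε r) / fder ε r)
        ≤ (1 - s) * (2 * Real.cos (fe ε r)) :=
      mul_le_mul_of_nonneg_left hc_le (by linarith)
    have h2 : s * (ε - r * Real.sin (fe ε r)) ≤ s * (3 * Real.cos (fe ε r)) :=
      mul_le_mul_of_nonneg_left hεd hs0
    have h3 : s * Real.cos (fe ε r) ≤ Real.cos (fe ε r) := by
      linarith [mul_le_mul_of_nonneg_right hsle hcosf.le]
    linarith [h1, h2, h3, mul_pos (by linarith : (0:ℝ) < π - 2) hcosf]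
  -- part (iii)
  have hB0 : 0 ≤ (1 - s) * r / Real.sin (fe ε r) + s * ε :=
    add_nonneg (div_nonneg (mul_nonneg (by linarith) hr0.le) hsinf.le)
      (mul_nonneg hs0 hε0.le)
  have part3 : |htilde ε s r| ≤ 3 * π * Real.sqrt 2 / 2 * ε ^ 2 * Real.cos (fe ε r) := by
    unfold htilde
    rw [abs_of_nonneg (mul_nonneg (mul_nonneg hε0.le hB0) part2a.le)]
    have h1 : ((1 - s) * r / Real.sin (fe ε r) + s * ε)
        * ((1 - s) * Real.cos (fe ε r) / fder ε r + s * (ε - r * Real.sin (fe ε r)))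
        ≤ (Real.sqrt 2 * ε) * (3 * π / 2 * Real.cos (fe ε r)) :=
      mul_le_mul part1 part2b part2a.le (by positivity)
    have h2 : ε * (((1 - s) * r / Real.sin (fe ε r) + s * ε)
        * ((1 - s) * Real.cos (fe ε r) / fder ε r + s * (ε - r * Real.sin (fe ε r))))
        ≤ ε * ((Real.sqrt 2 * ε) * (3 * π / 2 * Real.cos (fe ε r))) :=
      mul_le_mul_of_nonneg_left h1 hε0.le
    calc ε * ((1 - s) * r / Real.sin (fe ε r) + s * ε)
          * ((1 - s) * Real.cos (fe ε r) / fder ε r + s * (ε - r * Real.sin (fe ε r)))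
        = ε * (((1 - s) * r / Real.sin (fe ε r) + s * ε)
          * ((1 - s) * Real.cos (fe ε r) / fder ε r
            + s * (ε - r * Real.sin (fe ε r)))) := by ring
      _ ≤ ε * ((Real.sqrt 2 * ε) * (3 * π / 2 * Real.cos (fe ε r))) := h2
      _ = 3 * π * Real.sqrt 2 / 2 * ε ^ 2 * Real.cos (fe ε r) := by ring
  exact ⟨part1, ⟨part2a, part2b⟩, part3⟩
end

section
/- There exists ε₀ > 0 such that for every ε ∈ (0, ε₀] and every r ∈ [0, ε), with f_ε(r) = arctan(r/ε²) + (arctan ε)·r/ε: (i) 1/3 ≤ (ε − r) / ( max{ε, r/ε}·cos(f_ε(r)) ) ≤ 2·√2; and (ii) (ε − r·sin f_ε(r))·f_ε'(r)·max{ε, r/ε} ≤ 8·cos(f_ε(r)). -/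
open MeasureTheory Filter Topology Real

private lemma my_arctan_nonneg {x : ℝ} (hx : 0 ≤ x) : 0 ≤ Real.arctan x := by
  have := Real.arctan_strictMono.monotone hx
  simpa [Real.arctan_zero] using this

private lemma my_arctan_le_self {x : ℝ} (hx : 0 ≤ x) : Real.arctan x ≤ x := by
  rcases eq_or_lt_of_le hx with h | h
  · simp [← h]
  · have h1 : 0 < Real.arctan x := by
      have := Real.arctan_strictMono h
      simpa [Real.arctan_zero] using this
    have h2 := Real.lt_tan h1 (Real.arctan_lt_pi_div_two x)
    rw [Real.tan_arctan] at h2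
    exact h2.le

set_option maxHeartbeats 1000000 in
theorem eps_minus_g_bounds :
    ∃ ε₀ > (0 : ℝ), ∀ ε ∈ Set.Ioc (0 : ℝ) ε₀, ∀ r ∈ Set.Ico (0 : ℝ) ε,
      (1 / 3 ≤ (ε - r) / (max ε (r / ε) * Real.cos (fe ε r)) ∧
          (ε - r) / (max ε (r / ε) * Real.cos (fe ε r)) ≤ 2 * Real.sqrt 2) ∧
        (ε - r * Real.sin (fe ε r)) * fder ε r * max ε (r / ε)
          ≤ 8 * Real.cos (fe ε r) := by
  refine ⟨1/4, by norm_num, ?_⟩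
  rintro ε ⟨hε0, hε4⟩ r ⟨hr0, hrε⟩
  have hε1 : ε ≤ 1 := hε4.trans (by norm_num)
  have hεne : ε ≠ 0 := hε0.ne'
  obtain ⟨t, htdef⟩ : ∃ t : ℝ, t = ε - r := ⟨_, rfl⟩
  rw [← htdef]
  have ht0 : 0 < t := by rw [htdef]; linarith
  have htε : t ≤ ε := by rw [htdef]; linarith
  have hden : 0 < ε ^ 3 + r := by positivity
  obtain ⟨x, hxdef⟩ : ∃ x : ℝ, x = ε * t / (ε ^ 3 + r) := ⟨_, rfl⟩
  have hx0 : 0 < x := by rw [hxdef]; positivity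
  have hx' : x * (ε ^ 3 + r) = ε * t := by
    rw [hxdef]; field_simp
  obtain ⟨α, hαdef⟩ : ∃ a : ℝ, a = Real.arctan ε := ⟨_, rfl⟩
  have hα0 : 0 < α := by
    rw [hαdef]
    have := Real.arctan_strictMono hε0
    simpa [Real.arctan_zero] using this
  have hαε : α ≤ ε := by rw [hαdef]; exact my_arctan_le_self hε0.le
  have hfe : fe ε r = Real.arctan (r / ε ^ 2) + α * r / ε := by
    rw [hαdef]; rfl
  have hfder : fder ε r = ε ^ 2 / (ε ^ 4 + r ^ 2) + α / ε := by
    rw [hαdef]; rfl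
  -- the key identity
  have hu : (0:ℝ) ≤ r / ε ^ 2 := by positivity
  have hprodeq : (r / ε ^ 2) * x = r * t / (ε * (ε ^ 3 + r)) := by
    rw [hxdef]; field_simp
  have hrtlt : r * t < ε * (ε ^ 3 + r) := by
    have h1 : r * t ≤ r * ε := mul_le_mul_of_nonneg_left htε hr0
    have h2 : 0 < ε ^ 4 := pow_pos hε0 4
    nlinarith only [h1, h2]
  have hprod : (r / ε ^ 2) * x < 1 := by
    rw [hprodeq, div_lt_one (by positivity)]
    exact hrtlt
  have harg : (r / ε ^ 2 + x) / (1 - (r / ε ^ 2) * x) = ε⁻¹ := by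
    have h1 : 1 - (r / ε ^ 2) * x ≠ 0 := by
      have : r / ε ^ 2 * x < 1 := hprod
      linarith
    rw [div_eq_iff h1, hxdef, htdef]
    field_simp
    ring
  have hadd := Real.arctan_add hprod
  have h2 : Real.arctan (r / ε ^ 2) + Real.arctan x = π / 2 - α := by
    rw [hadd, harg, Real.arctan_inv_of_pos hε0, hαdef]
  have h3 : α * r / ε + α * t / ε = α := by
    rw [htdef]; field_simp; ring
  have hid : fe ε r = π / 2 - (Real.arctan x + α * t / ε) := by
    rw [hfe]; linarith
  obtain ⟨y, hydef⟩ : ∃ y : ℝ, y = Real.arctan x + α * t / ε := ⟨_, rfl⟩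
  rw [← hydef] at hid
  have harcx0 : 0 < Real.arctan x := by
    have := Real.arctan_strictMono hx0
    simpa [Real.arctan_zero] using this
  have hy2nn : 0 ≤ α * t / ε := by positivity
  have hy0 : 0 < y := by rw [hydef]; positivity
  have hfe0 : 0 ≤ fe ε r := by
    have h4 : 0 ≤ Real.arctan (r / ε ^ 2) := my_arctan_nonneg hu
    have h5 : 0 ≤ α * r / ε := by positivity
    rw [hfe]; linarith
  have hyπ : y ≤ π / 2 := by linarith [hid ▸ hfe0]
  have hcosf : Real.cos (fe ε r) = Real.sin y := by
    rw [hid, Real.cos_pi_div_two_sub]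
  have hsinf : Real.sin (fe ε r) = Real.cos y := by
    rw [hid, Real.sin_pi_div_two_sub]
  have hsiny : 0 < Real.sin y :=
    Real.sin_pos_of_pos_of_lt_pi hy0 (lt_of_le_of_lt hyπ (by linarith [Real.pi_pos]))
  have hcos0 : 0 < Real.cos (fe ε r) := hcosf ▸ hsiny
  obtain ⟨M, hMdef⟩ : ∃ M : ℝ, M = max ε (r / ε) := ⟨_, rfl⟩
  rw [← hMdef]
  have hMε : ε ≤ M := hMdef ▸ le_max_left _ _
  have hM0 : 0 < M := lt_of_lt_of_le hε0 hMε
  have hrM : r ≤ ε * M := by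
    have h := le_max_right ε (r / ε)
    rw [← hMdef, div_le_iff₀ hε0] at h
    linarith only [h]
  have hM1 : M ≤ 1 := by
    rw [hMdef]
    exact max_le hε1 (by rw [div_le_one hε0]; linarith)
  -- key lower bound on cos
  have hε2M : ε * ε ≤ ε * M := mul_le_mul_of_nonneg_left hMε hε0.le
  have hmain : (ε ^ 3 + r) ^ 2 + (ε * t) ^ 2 ≤ 8 * (ε * M) ^ 2 := by
    have ha : ε ^ 3 + r ≤ 2 * (ε * M) := by
      have h6 : 0 ≤ ε ^ 2 * (1 - ε) := mul_nonneg (sq_nonneg ε) (by linarith)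
      nlinarith only [hε2M, hrM, h6]
    have hb : ε * t ≤ ε * M := mul_le_mul_of_nonneg_left (htε.trans hMε) hε0.le
    have ha2 := mul_self_le_mul_self hden.le ha
    have hb2 := mul_self_le_mul_self (by positivity : (0:ℝ) ≤ ε * t) hb
    nlinarith only [ha2, hb2]
  have hs0 : 0 < Real.sqrt (1 + x ^ 2) := Real.sqrt_pos.2 (by positivity)
  have hs2 : (Real.sqrt (1 + x ^ 2)) ^ 2 = 1 + x ^ 2 := Real.sq_sqrt (by positivity)
  have hq2 : (Real.sqrt 2) ^ 2 = 2 := Real.sq_sqrt (by norm_num)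
  have hq0 : 0 ≤ Real.sqrt 2 := Real.sqrt_nonneg 2
  have hts : ε * t * Real.sqrt (1 + x ^ 2) ≤ 2 * Real.sqrt 2 * (ε * M) * x := by
    have hx2 : (x * (ε ^ 3 + r)) ^ 2 = (ε * t) ^ 2 := by rw [hx']
    apply le_of_pow_le_pow_left₀ two_ne_zero (by positivity)
    have e1 : (ε * t * Real.sqrt (1 + x ^ 2)) ^ 2 = (ε * t) ^ 2 * (1 + x ^ 2) := by
      rw [mul_pow, hs2]
    have e2 : (2 * Real.sqrt 2 * (ε * M) * x) ^ 2
        = 4 * (Real.sqrt 2) ^ 2 * ((ε * M) ^ 2 * x ^ 2) := by ring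
    rw [e1, e2, hq2]
    calc (ε * t) ^ 2 * (1 + x ^ 2)
        = ((ε ^ 3 + r) ^ 2 + (ε * t) ^ 2) * x ^ 2 := by linear_combination (-1 : ℝ) * hx2
      _ ≤ (8 * (ε * M) ^ 2) * x ^ 2 := mul_le_mul_of_nonneg_right hmain (sq_nonneg x)
      _ = 4 * 2 * ((ε * M) ^ 2 * x ^ 2) := by ring
  have hsinarct : Real.sin (Real.arctan x) ≤ Real.sin y := by
    apply Real.strictMonoOn_sin.monotoneOn _ _ (by rw [hydef]; linarith)
    · exact ⟨(Real.neg_pi_div_two_lt_arctan x).le, (Real.arctan_lt_pi_div_two x).le⟩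
    · exact ⟨by linarith [Real.pi_pos], hyπ⟩
  have hkey : ε * t ≤ 2 * Real.sqrt 2 * (ε * M) * Real.cos (fe ε r) := by
    rw [hcosf]
    have h1 : Real.sin (Real.arctan x) = x / Real.sqrt (1 + x ^ 2) := Real.sin_arctan x
    have h2 : ε * t ≤ 2 * Real.sqrt 2 * (ε * M) * (x / Real.sqrt (1 + x ^ 2)) := by
      rw [mul_div_assoc', le_div_iff₀ hs0]
      linarith only [hts]
    calc ε * t ≤ 2 * Real.sqrt 2 * (ε * M) * (x / Real.sqrt (1 + x ^ 2)) := h2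
      _ ≤ 2 * Real.sqrt 2 * (ε * M) * Real.sin y := by
          apply mul_le_mul_of_nonneg_left _ (by positivity)
          rw [← h1]; exact hsinarct
  have hB : t ≤ 2 * Real.sqrt 2 * (M * Real.cos (fe ε r)) := by
    have h7 : ε * t ≤ ε * (2 * Real.sqrt 2 * (M * Real.cos (fe ε r))) := by
      linarith only [hkey]
    exact le_of_mul_le_mul_left h7 hε0
  -- bounds used for upper estimates of cos and sin
  have hyxt : y ≤ x + t := by
    have h1 : Real.arctan x ≤ x := my_arctan_le_self hx0.le
    have h2 : α * t / ε ≤ t := by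
      rw [div_le_iff₀ hε0]
      have := mul_le_mul_of_nonneg_right hαε ht0.le
      linarith only [this]
    rw [hydef]; linarith
  have hrx : r * x ≤ ε * t := by
    have h8 : 0 ≤ x * ε ^ 3 := by positivity
    linarith only [hx', h8]
  have hrt : r * t ≤ ε * t := mul_le_mul_of_nonneg_right hrε.le ht0.le
  constructor
  · constructor
    · -- lower bound 1/3
      rw [le_div_iff₀ (by positivity)]
      have hMcos : M * Real.cos (fe ε r) ≤ 3 * t := by
        rcases max_choice ε (r / ε) with hMc | hMc
        · rw [← hMdef] at hMc
          have hrε2 : r ≤ ε * ε := by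
            have h := le_max_right ε (r / ε)
            rw [← hMdef, hMc, div_le_iff₀ hε0] at h
            linarith only [h]
          have hc1 : ε * Real.cos (fe ε r) ≤ ε * 1 :=
            mul_le_mul_of_nonneg_left (Real.cos_le_one _) hε0.le
          have hc2 : ε * ε ≤ ε * (1/4) := mul_le_mul_of_nonneg_left hε4 hε0.le
          rw [hMc]
          -- ε * cos ≤ ε ≤ 3t  since r ≤ ε² ≤ ε/4 hence t ≥ (3/4)ε
          have h9 : t = ε - r := htdef
          linarith only [hc1, hc2, hrε2, h9, hε0]
        · rw [← hMdef] at hMc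
          have hsy : Real.sin y ≤ y := Real.sin_le hy0.le
          rw [hMc, hcosf, div_mul_eq_mul_div, div_le_iff₀ hε0]
          have h5 : r * Real.sin y ≤ r * (x + t) :=
            mul_le_mul_of_nonneg_left (hsy.trans hyxt) hr0
          have h10 : 0 ≤ ε * t := by positivity
          -- r sin y ≤ r x + r t ≤ 2 ε t ≤ 3 t ε
          nlinarith only [h5, hrx, hrt, h10]
      linarith only [hMcos]
    · -- upper bound 2√2
      rw [div_le_iff₀ (by positivity)]
      linarith only [hB]
  · -- part (ii)
    have hcyb : 1 - y ^ 2 / 2 ≤ Real.cos y := Real.one_sub_sq_div_two_le_cos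
    have hA : ε - r * Real.sin (fe ε r) ≤ t + r * y ^ 2 / 2 := by
      rw [hsinf]
      have h11 := mul_le_mul_of_nonneg_left hcyb hr0
      have h9 : t = ε - r := htdef
      nlinarith only [h11, h9]
    have hrx2 : r * x ^ 2 ≤ t / 4 := by
      have hx2 : x ^ 2 * (ε ^ 3 + r) ^ 2 = (ε * t) ^ 2 := by rw [← mul_pow, hx']
      have key : 4 * (r * (ε * t) ^ 2) ≤ t * (ε ^ 3 + r) ^ 2 := by
        have k1 : 0 ≤ t * (ε ^ 3 - r) ^ 2 := mul_nonneg ht0.le (sq_nonneg _)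
        have k2 : 0 ≤ 4 * (r * (ε ^ 2 * t)) * (ε - t) := by
          have : 0 ≤ ε - t := by linarith
          positivity
        nlinarith only [k1, k2]
      refine le_of_mul_le_mul_right ?_ (pow_pos hden 2)
      have e : r * x ^ 2 * (ε ^ 3 + r) ^ 2 = r * (ε * t) ^ 2 := by
        linear_combination r * hx2
      linarith only [key, e]
    have hrt2 : r * t ^ 2 ≤ t / 16 := by
      have k3 : r * t ^ 2 ≤ (1/4) * t ^ 2 :=
        mul_le_mul_of_nonneg_right (by linarith) (sq_nonneg t)
      have k4 : t * t ≤ (1/4) * t := mul_le_mul_of_nonneg_right (by linarith) ht0.le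
      nlinarith only [k3, k4]
    have hy2b : r * y ^ 2 / 2 ≤ 5 / 16 * t := by
      have h6 : y ^ 2 ≤ (x + t) ^ 2 := pow_le_pow_left₀ hy0.le hyxt 2
      have h7 : r * y ^ 2 ≤ r * (x + t) ^ 2 := mul_le_mul_of_nonneg_left h6 hr0
      have h12 : 0 ≤ r * (x - t) ^ 2 := mul_nonneg hr0 (sq_nonneg _)
      -- r(x+t)²/2 ≤ r x² + r t² ≤ t/4 + t/16
      nlinarith only [h7, hrx2, hrt2, h12]
    have hA2 : ε - r * Real.sin (fe ε r) ≤ 21 / 16 * t := by linarith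
    have hfd0 : 0 ≤ fder ε r := by
      rw [hfder]; positivity
    have hfdM : fder ε r * M ^ 2 ≤ 2 := by
      rw [hfder]
      have h1 : ε ^ 2 / (ε ^ 4 + r ^ 2) * M ^ 2 ≤ 1 := by
        rw [div_mul_eq_mul_div, div_le_one (by positivity)]
        rcases max_choice ε (r / ε) with hMc | hMc <;> rw [← hMdef] at hMc <;> rw [hMc]
        · nlinarith only [sq_nonneg r]
        · have h8 : ε ^ 2 * (r / ε) ^ 2 = r ^ 2 := by field_simp
          rw [h8]
          nlinarith only [pow_pos hε0 4]
      have h2 : α / ε * M ^ 2 ≤ 1 := by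
        have h9 : α / ε ≤ 1 := by rw [div_le_one hε0]; exact hαε
        have h10 : 0 ≤ α / ε := by positivity
        have hM2 : M ^ 2 ≤ 1 := by nlinarith only [hM1, hM0.le]
        calc α / ε * M ^ 2 ≤ 1 * 1 :=
          mul_le_mul h9 hM2 (sq_nonneg M) zero_le_one
        _ = 1 := by norm_num
      rw [add_mul]
      linarith only [h1, h2]
    have hsq14 : (1.4 : ℝ) ≤ Real.sqrt 2 := by nlinarith only [hq2, hq0]
    have hstep : (ε - r * Real.sin (fe ε r)) * fder ε r * M * M ≤ 21 / 8 * t := by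
      have he : (ε - r * Real.sin (fe ε r)) * fder ε r * M * M
          = (ε - r * Real.sin (fe ε r)) * (fder ε r * M ^ 2) := by ring
      rw [he]
      have h11 : (ε - r * Real.sin (fe ε r)) * (fder ε r * M ^ 2)
          ≤ (21 / 16 * t) * (fder ε r * M ^ 2) :=
        mul_le_mul_of_nonneg_right hA2 (by positivity)
      have h12 : (21 / 16 * t) * (fder ε r * M ^ 2) ≤ (21 / 16 * t) * 2 :=
        mul_le_mul_of_nonneg_left hfdM (by positivity)
      linarith only [h11, h12]
    have hstep2 : 21 / 8 * t ≤ 8 * Real.cos (fe ε r) * M := by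
      have h13 := mul_le_mul_of_nonneg_left hB (by positivity : (0:ℝ) ≤ 2 * Real.sqrt 2)
      have h14 : 2 * Real.sqrt 2 * (2 * Real.sqrt 2 * (M * Real.cos (fe ε r)))
          = 8 * (M * Real.cos (fe ε r)) := by
        linear_combination 4 * (M * Real.cos (fe ε r)) * hq2
      have h15 : 21 / 8 * t ≤ 2 * Real.sqrt 2 * t :=
        mul_le_mul_of_nonneg_right (by linarith only [hsq14]) ht0.le
      linarith only [h13, h14, h15]
    exact le_of_mul_le_mul_right (by linarith only [hstep, hstep2]) hM0
end

section
/- Let H : (0, ∞) → [0, ∞) be convex and satisfy lim_{t→∞} H(t)/t = ∞ and lim_{s→0⁺} H(s) = ∞. If ∫_{ρ=0}^{1/2} ∫_{t=1/2}^{1} H( (1−ρ)²·ρ^{-2}·t³ )·ρ² dt dρ < ∞, then ∫_{s=1}^{∞} H(s)·s^{-5/2} ds < ∞. -/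
/-!
Fix `t ∈ (1/2, 1)`. The substitution `s = (1 - ρ)² ρ⁻² t³` maps `ρ ∈ (0, 1/2)` decreasingly onto
`(t³, ∞) ⊇ (1, ∞)`, and since `s ≥ (8ρ)⁻²` and `|ds/dρ| ≤ 2ρ⁻³` its Jacobian factor satisfies
`|ds/dρ| · s^(-5/2) ≤ 65536 ρ²`. Hence `∫₁^∞ H(s) s^(-5/2) ds ≤ 65536 ∫₀^(1/2) H(det Du) ρ² dρ` for
every such `t`; averaging over `t` and exchanging the integrals (Tonelli, legitimate because the
convex `H` is continuous) bounds the left side by a multiple of the finite double integral.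
-/

open MeasureTheory Filter Topology Set

open scoped ENNReal

theorem ENNReal.ofReal_mul_ofReal_mul_le_of_mul_le {a w c h C : ℝ} (ha : 0 ≤ a) (hw : 0 ≤ w)
    (hC : 0 ≤ C) (hle : a * w ≤ C * c) :
    ENNReal.ofReal a * ENNReal.ofReal (h * w) ≤ ENNReal.ofReal C * ENNReal.ofReal (h * c) := by
  rcases le_total h 0 with hh | hh
  · simp [ENNReal.ofReal_of_nonpos (mul_nonpos_of_nonpos_of_nonneg hh hw)]
  · rw [← ENNReal.ofReal_mul ha, ← ENNReal.ofReal_mul hC]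
    refine ENNReal.ofReal_le_ofReal ?_
    calc a * (h * w) = h * (a * w) := by ring
      _ ≤ h * (C * c) := by gcongr
      _ = C * (h * c) := by ring

theorem lt_top_of_forall_le_mul_setLIntegral {α : Type*} [MeasurableSpace α] {μ : Measure α}
    {s : Set α} (hs : MeasurableSet s) (hμs : μ s ≠ 0) {I C : ℝ≥0∞} (hC : C ≠ ∞)
    {g : α → ℝ≥0∞} (hle : ∀ x ∈ s, I ≤ C * g x) (hg : ∫⁻ x in s, g x ∂μ < ∞) : I < ∞ := by
  refine ENNReal.lt_top_of_mul_ne_top_left (ne_of_lt ?_) hμs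
  calc I * μ s = ∫⁻ _ in s, I ∂μ := (setLIntegral_const s I).symm
    _ ≤ ∫⁻ x in s, C * g x ∂μ := setLIntegral_mono' hs hle
    _ = C * ∫⁻ x in s, g x ∂μ := lintegral_const_mul' C g hC
    _ < ∞ := ENNReal.mul_lt_top hC.lt_top hg

/-- `det Du` of the Conti–De Lellis map at radius `ρ` and `t = cos φ`. -/
noncomputable def contiDeLellisDet (ρ t : ℝ) : ℝ := (1 - ρ) ^ 2 * (ρ ^ 2)⁻¹ * t ^ 3

theorem contiDeLellisDet_eq {ρ : ℝ} (hρ : ρ ≠ 0) (t : ℝ) :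
    contiDeLellisDet ρ t = (ρ⁻¹ - 1) ^ 2 * t ^ 3 := by
  unfold contiDeLellisDet
  field_simp

theorem hasDerivAt_contiDeLellisDet {ρ : ℝ} (hρ : ρ ≠ 0) (t : ℝ) :
    HasDerivAt (contiDeLellisDet · t) (-(2 * (1 - ρ) * (ρ ^ 3)⁻¹ * t ^ 3)) ρ := by
  have h1 := ((hasDerivAt_id ρ).const_sub 1).pow 2
  have h2 := (hasDerivAt_pow 2 ρ).inv (pow_ne_zero 2 hρ)
  exact ((h1.mul h2).mul_const (t ^ 3)).congr_deriv (by simp; field_simp; ring)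

theorem antitoneOn_contiDeLellisDet {t : ℝ} (ht : 0 ≤ t) :
    AntitoneOn (contiDeLellisDet · t) (Ioc 0 1) := by
  refine antitoneOn_of_deriv_nonpos (convex_Ioc 0 1)
    (fun ρ hρ => (hasDerivAt_contiDeLellisDet hρ.1.ne' t).continuousAt.continuousWithinAt)
    (fun ρ hρ => ?_) (fun ρ hρ => ?_)
  · rw [interior_Ioc] at hρ
    exact (hasDerivAt_contiDeLellisDet hρ.1.ne' t).differentiableAt.differentiableWithinAt
  · rw [interior_Ioc] at hρ
    rw [(hasDerivAt_contiDeLellisDet hρ.1.ne' t).deriv]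
    have := hρ.1
    have : 0 ≤ 1 - ρ := sub_nonneg.2 hρ.2.le
    exact neg_nonpos.2 (by positivity)

theorem contiDeLellisDet_pos {ρ t : ℝ} (hρ₀ : 0 < ρ) (hρ₁ : ρ < 1) (ht : 0 < t) :
    0 < contiDeLellisDet ρ t := by
  unfold contiDeLellisDet
  have : 0 < 1 - ρ := sub_pos.2 hρ₁
  positivity

theorem Ioi_subset_image_contiDeLellisDet {t : ℝ} (ht : 0 < t) :
    Ioi (t ^ 3) ⊆ (contiDeLellisDet · t) '' Ioo 0 (1 / 2) := by
  intro s (hs : t ^ 3 < s)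
  have ht3 : 0 < t ^ 3 := by positivity
  set r := Real.sqrt (s / t ^ 3)
  have hr : 1 < r := Real.lt_sqrt_of_sq_lt (by rw [one_pow, one_lt_div ht3]; exact hs)
  have hr₀ : 0 < 1 + r := by linarith
  refine ⟨(1 + r)⁻¹, ⟨inv_pos.2 hr₀, ?_⟩, ?_⟩
  · rw [one_div]
    exact inv_strictAnti₀ two_pos (by linarith)
  · have hr2 : r ^ 2 = s / t ^ 3 := Real.sq_sqrt (div_pos (ht3.trans hs) ht3).le
    show contiDeLellisDet (1 + r)⁻¹ t = s
    rw [contiDeLellisDet_eq (inv_pos.2 hr₀).ne', inv_inv, add_sub_cancel_left, hr2,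
      div_mul_cancel₀ s ht3.ne']

theorem inv_sq_le_contiDeLellisDet {ρ t : ℝ} (hρ₀ : 0 < ρ) (hρ : ρ ≤ 1 / 2) (ht : 1 / 2 ≤ t) :
    ((8 * ρ) ^ 2)⁻¹ ≤ contiDeLellisDet ρ t := by
  have h1 : (1 / 4 : ℝ) ≤ (1 - ρ) ^ 2 := by nlinarith
  have h2 : (1 / 8 : ℝ) ≤ t ^ 3 := by
    calc (1 / 8 : ℝ) = (1 / 2) ^ 3 := by norm_num
      _ ≤ t ^ 3 := by gcongr
  unfold contiDeLellisDet
  calc ((8 * ρ) ^ 2)⁻¹ = 1 / 4 * (ρ ^ 2)⁻¹ * (1 / 16) := by ring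
    _ ≤ 1 / 4 * (ρ ^ 2)⁻¹ * (1 / 8) := by gcongr; norm_num
    _ ≤ (1 - ρ) ^ 2 * (ρ ^ 2)⁻¹ * t ^ 3 := by gcongr

theorem rpow_neg_five_halves_contiDeLellisDet_le {ρ t : ℝ} (hρ₀ : 0 < ρ) (hρ : ρ ≤ 1 / 2)
    (ht : 1 / 2 ≤ t) : contiDeLellisDet ρ t ^ (-(5 : ℝ) / 2) ≤ (8 * ρ) ^ 5 := by
  calc contiDeLellisDet ρ t ^ (-(5 : ℝ) / 2) ≤ (((8 * ρ) ^ 2)⁻¹) ^ (-(5 : ℝ) / 2) :=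
        Real.rpow_le_rpow_of_nonpos (by positivity) (inv_sq_le_contiDeLellisDet hρ₀ hρ ht)
          (by norm_num)
    _ = (8 * ρ) ^ 5 := by
        rw [← Real.rpow_natCast, ← Real.rpow_neg_one, ← Real.rpow_mul (by positivity),
          ← Real.rpow_mul (by positivity)]
        norm_num

theorem jacobian_mul_rpow_contiDeLellisDet_le {ρ t : ℝ} (hρ₀ : 0 < ρ) (hρ : ρ ≤ 1 / 2)
    (ht : 1 / 2 ≤ t) (ht₁ : t ≤ 1) :
    2 * (1 - ρ) * (ρ ^ 3)⁻¹ * t ^ 3 * contiDeLellisDet ρ t ^ (-(5 : ℝ) / 2) ≤ 65536 * ρ ^ 2 := by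
  have hjac : 2 * (1 - ρ) * (ρ ^ 3)⁻¹ * t ^ 3 ≤ 2 * (ρ ^ 3)⁻¹ := by
    have : (1 - ρ) * t ^ 3 ≤ 1 := mul_le_one₀ (by linarith) (by positivity)
      (pow_le_one₀ (by linarith) ht₁)
    calc 2 * (1 - ρ) * (ρ ^ 3)⁻¹ * t ^ 3 = 2 * (ρ ^ 3)⁻¹ * ((1 - ρ) * t ^ 3) := by ring
      _ ≤ 2 * (ρ ^ 3)⁻¹ * 1 := by gcongr
      _ = 2 * (ρ ^ 3)⁻¹ := mul_one _
  calc 2 * (1 - ρ) * (ρ ^ 3)⁻¹ * t ^ 3 * contiDeLellisDet ρ t ^ (-(5 : ℝ) / 2)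
      ≤ 2 * (ρ ^ 3)⁻¹ * (8 * ρ) ^ 5 := by
        refine mul_le_mul hjac (rpow_neg_five_halves_contiDeLellisDet_le hρ₀ hρ ht)
          (Real.rpow_nonneg ?_ _) (by positivity)
        exact (contiDeLellisDet_pos hρ₀ (by linarith) (by linarith)).le
    _ = 65536 * ρ ^ 2 := by field_simp; ring

theorem lintegral_Ioi_le_lintegral_contiDeLellisDet (H : ℝ → ℝ) {t : ℝ} (ht : 1 / 2 ≤ t)
    (ht₁ : t ≤ 1) :
    ∫⁻ s in Ioi 1, ENNReal.ofReal (H s * s ^ (-(5 : ℝ) / 2)) ≤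
      65536 * ∫⁻ ρ in Ioo 0 (1 / 2), ENNReal.ofReal (H (contiDeLellisDet ρ t) * ρ ^ 2) := by
  have ht₀ : 0 < t := by linarith
  have hderiv : ∀ ρ ∈ Ioo (0 : ℝ) (1 / 2), HasDerivWithinAt (contiDeLellisDet · t)
      (-(2 * (1 - ρ) * (ρ ^ 3)⁻¹ * t ^ 3)) (Ioo 0 (1 / 2)) ρ := fun ρ hρ =>
    (hasDerivAt_contiDeLellisDet hρ.1.ne' t).hasDerivWithinAt
  have hanti : AntitoneOn (contiDeLellisDet · t) (Ioo 0 (1 / 2)) :=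
    (antitoneOn_contiDeLellisDet ht₀.le).mono fun ρ hρ => ⟨hρ.1, by linarith [hρ.2]⟩
  have himage : Ioi 1 ⊆ (contiDeLellisDet · t) '' Ioo 0 (1 / 2) :=
    (Ioi_subset_Ioi (pow_le_one₀ ht₀.le ht₁)).trans (Ioi_subset_image_contiDeLellisDet ht₀)
  calc ∫⁻ s in Ioi 1, ENNReal.ofReal (H s * s ^ (-(5 : ℝ) / 2))
      ≤ ∫⁻ s in (contiDeLellisDet · t) '' Ioo 0 (1 / 2),
          ENNReal.ofReal (H s * s ^ (-(5 : ℝ) / 2)) := lintegral_mono_set himage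
    _ = ∫⁻ ρ in Ioo 0 (1 / 2), ENNReal.ofReal (-(-(2 * (1 - ρ) * (ρ ^ 3)⁻¹ * t ^ 3))) *
          ENNReal.ofReal (H (contiDeLellisDet ρ t) * contiDeLellisDet ρ t ^ (-(5 : ℝ) / 2)) :=
        lintegral_image_eq_lintegral_deriv_mul_of_antitoneOn measurableSet_Ioo hderiv hanti _
    _ ≤ ∫⁻ ρ in Ioo 0 (1 / 2), 65536 * ENNReal.ofReal (H (contiDeLellisDet ρ t) * ρ ^ 2) := by
        refine setLIntegral_mono' measurableSet_Ioo fun ρ hρ => ?_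
        rw [neg_neg, ← ENNReal.ofReal_ofNat]
        refine ENNReal.ofReal_mul_ofReal_mul_le_of_mul_le ?_ ?_ (by norm_num)
          (jacobian_mul_rpow_contiDeLellisDet_le hρ.1 hρ.2.le ht ht₁)
        · have : 0 ≤ 1 - ρ := by linarith [hρ.2]
          have := hρ.1
          positivity
        · exact Real.rpow_nonneg (contiDeLellisDet_pos hρ.1 (by linarith [hρ.2]) ht₀).le _
    _ = 65536 * ∫⁻ ρ in Ioo 0 (1 / 2), ENNReal.ofReal (H (contiDeLellisDet ρ t) * ρ ^ 2) :=
        lintegral_const_mul' _ _ (by simp)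

theorem lintegral_lintegral_swap_contiDeLellisDet {H : ℝ → ℝ} (hH : ContinuousOn H (Ioi 0)) :
    ∫⁻ ρ in Ioo 0 (1 / 2), ∫⁻ t in Ioo (1 / 2) 1,
        ENNReal.ofReal (H (contiDeLellisDet ρ t) * ρ ^ 2) =
      ∫⁻ t in Ioo (1 / 2) 1, ∫⁻ ρ in Ioo 0 (1 / 2),
        ENNReal.ofReal (H (contiDeLellisDet ρ t) * ρ ^ 2) := by
  refine lintegral_lintegral_swap ?_
  rw [Measure.prod_restrict, ← Measure.volume_eq_prod]
  refine ContinuousOn.aemeasurable ?_ (measurableSet_Ioo.prod measurableSet_Ioo)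
  refine ENNReal.continuous_ofReal.comp_continuousOn
    (ContinuousOn.mul (hH.comp ?_ fun p hp => ?_) (continuous_fst.pow 2).continuousOn)
  · unfold contiDeLellisDet
    refine ContinuousOn.mul (ContinuousOn.mul (by fun_prop) ?_) (by fun_prop)
    exact (continuous_fst.pow 2).continuousOn.inv₀ fun p hp => pow_ne_zero 2 hp.1.1.ne'
  · exact contiDeLellisDet_pos hp.1.1 (by linarith [hp.1.2]) (by linarith [hp.2.1])

theorem integrability_H_at_infinity_general (H : ℝ → ℝ)
    (hconv : ConvexOn ℝ (Set.Ioi 0) H)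
    (hfin : (∫⁻ ρ in Set.Ioo (0 : ℝ) (1 / 2), ∫⁻ t in Set.Ioo (1 / 2 : ℝ) 1,
        ENNReal.ofReal (H ((1 - ρ) ^ 2 * (ρ ^ 2)⁻¹ * t ^ 3) * ρ ^ 2)) < ⊤) :
    (∫⁻ s in Set.Ioi (1 : ℝ), ENNReal.ofReal (H s * s ^ (-(5 : ℝ) / 2))) < ⊤ := by
  refine lt_top_of_forall_le_mul_setLIntegral (μ := volume) measurableSet_Ioo ?_ (by simp)
    (fun t ht => lintegral_Ioi_le_lintegral_contiDeLellisDet H ht.1.le ht.2.le) ?_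
  · norm_num
  · rw [← lintegral_lintegral_swap_contiDeLellisDet (hconv.continuousOn isOpen_Ioi)]
    exact hfin

/-- let `H : (0,∞) → [0,∞)` be convex with `H(t)/t → ∞` as `t → ∞` and
`H(s) → ∞` as `s → 0⁺`. If `∫₀^{1/2} ∫_{1/2}^{1} H((1−ρ)²·ρ^{-2}·t³)·ρ² dt dρ < ∞`,
then `∫₁^∞ H(s)·s^{-5/2} ds < ∞`. -/
theorem integrability_H_at_infinity (H : ℝ → ℝ)
    (hH0 : ∀ x ∈ Set.Ioi (0 : ℝ), 0 ≤ H x)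
    (hconv : ConvexOn ℝ (Set.Ioi 0) H)
    (hinfty : Tendsto (fun t => H t / t) atTop atTop)
    (h0 : Tendsto H (𝓝[>] 0) atTop)
    (hfin : (∫⁻ ρ in Set.Ioo (0 : ℝ) (1 / 2), ∫⁻ t in Set.Ioo (1 / 2 : ℝ) 1,
        ENNReal.ofReal (H ((1 - ρ) ^ 2 * (ρ ^ 2)⁻¹ * t ^ 3) * ρ ^ 2)) < ⊤) :
    (∫⁻ s in Set.Ioi (1 : ℝ), ENNReal.ofReal (H s * s ^ (-(5 : ℝ) / 2))) < ⊤ :=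
  integrability_H_at_infinity_general H hconv hfin
end

section
/- Fix γ with 0 < γ ≤ 1/3 and let ε > 0 satisfy ε^{2(1−γ)} ≤ √2/π. Then for every a ∈ [0, 1] and every real number I with |I| ≤ (9π·√2/2)·ε²·a, one has (a + 2·ε^γ)³ − I ≥ (a + ε^γ)³; in particular ((a + 2·ε^γ)³ − I)^{1/3} ≥ a + ε^γ. -/
open Real

/-- fix `γ` with `0 < γ ≤ 1/3` and `ε > 0` with `ε^{2(1−γ)} ≤ √2/π`.
Then for every `a ∈ [0, 1]` and every real `I` with `|I| ≤ (9π√2/2)·ε²·a`,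
`(a + 2ε^γ)³ − I ≥ (a + ε^γ)³`, and in particular
`((a + 2ε^γ)³ − I)^{1/3} ≥ a + ε^γ`. -/
theorem cube_root_lower_bound (γ ε : ℝ) (hγ0 : 0 < γ) (hγ : γ ≤ 1 / 3) (hε : 0 < ε)
    (hsmall : ε ^ (2 * (1 - γ)) ≤ Real.sqrt 2 / π) :
    ∀ a ∈ Set.Icc (0 : ℝ) 1, ∀ I : ℝ, |I| ≤ 9 * π * Real.sqrt 2 / 2 * ε ^ 2 * a →
      (a + ε ^ γ) ^ 3 ≤ (a + 2 * ε ^ γ) ^ 3 - I ∧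
        a + ε ^ γ ≤ ((a + 2 * ε ^ γ) ^ 3 - I) ^ ((1 : ℝ) / 3) := by
  intro a ha I hI
  obtain ⟨ha0, ha1⟩ := ha
  set t : ℝ := ε ^ γ with ht_def
  have ht : 0 < t := Real.rpow_pos_of_pos hε γ
  have hπ : (0 : ℝ) < π := Real.pi_pos
  have hs2 : Real.sqrt 2 * Real.sqrt 2 = 2 := Real.mul_self_sqrt (by norm_num)
  -- ε^2 = t^2 * ε^(2(1-γ))
  have hsplit : ε ^ 2 = t ^ 2 * ε ^ (2 * (1 - γ)) := by
    have h1 : ε ^ 2 = ε ^ ((2 : ℝ)) := by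
      rw [← Real.rpow_natCast ε 2]; norm_num
    have h2 : ε ^ ((2 : ℝ)) = ε ^ (2 * γ) * ε ^ (2 * (1 - γ)) := by
      rw [← Real.rpow_add hε]; ring_nf
    have h3 : t ^ 2 = ε ^ (2 * γ) := by
      rw [ht_def, ← Real.rpow_natCast (ε ^ γ) 2, ← Real.rpow_mul hε.le]
      norm_num; ring_nf
    rw [h1, h2, h3]
  -- bound on |I|
  have hIb : |I| ≤ 9 * t ^ 2 * a := by
    have key : 9 * π * Real.sqrt 2 / 2 * ε ^ 2 * a ≤ 9 * t ^ 2 * a := by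
      have hπe : π * ε ^ (2 * (1 - γ)) ≤ Real.sqrt 2 := by
        rw [div_eq_mul_inv] at hsmall
        calc π * ε ^ (2 * (1 - γ)) ≤ π * (Real.sqrt 2 * π⁻¹) := by
              exact mul_le_mul_of_nonneg_left hsmall hπ.le
          _ = Real.sqrt 2 := by field_simp
      rw [hsplit]
      have hεp : 0 < ε ^ (2 * (1 - γ)) := Real.rpow_pos_of_pos hε _
      nlinarith [Real.sqrt_nonneg 2, sq_nonneg t, mul_nonneg (sq_nonneg t) ha0,
        mul_le_mul_of_nonneg_right hπe (mul_nonneg (mul_nonneg (Real.sqrt_nonneg 2) (sq_nonneg t)) ha0)]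
    exact hI.trans key
  have hmain : (a + t) ^ 3 ≤ (a + 2 * t) ^ 3 - I := by
    have h1 : I ≤ 9 * t ^ 2 * a := (le_abs_self I).trans hIb
    nlinarith [sq_nonneg (a - t), sq_nonneg (a + t), ht.le, mul_nonneg ha0 ht.le,
      mul_pos ht ht, mul_nonneg (mul_nonneg ha0 ht.le) ht.le]
  refine ⟨hmain, ?_⟩
  have hat : 0 ≤ a + t := by positivity
  have hpow : ((a + t) ^ 3 : ℝ) ^ ((1 : ℝ) / 3) = a + t := by
    rw [← Real.rpow_natCast (a + t) 3, ← Real.rpow_mul hat]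
    norm_num
  calc a + t = ((a + t) ^ 3 : ℝ) ^ ((1 : ℝ) / 3) := hpow.symm
    _ ≤ ((a + 2 * t) ^ 3 - I) ^ ((1 : ℝ) / 3) :=
        Real.rpow_le_rpow (by positivity) hmain (by norm_num)
end
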